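/- Fix an integer d ≥ 2 and let m = d − 2. For every n ≥ 0, the corridor number c^{(m)}_n equals the range of the n-th row of the circular Pascal array of order d; that is, c^{(m)}_n = (max_{0 ≤ k ≤ d−1} σ_{n,k}) − (min_{0 ≤ k ≤ d−1} σ_{n,k}). -/

import Mathlib

/-- Binomial coefficient `C(n,x)` with integer lower argument, zero when `x < 0` or `x > n`. -/
noncomputable def binomZ (n : ℕ) (x : ℤ) : ℕ := if 0 ≤ x then n.choose x.toNat else 0

/-- Circular Pascal array of order `d` with initial offset `y0`:
`σ_{n,k} = Σ_{i=0}^{y0} Σ_{j∈ℤ} C(n, k − i + d·j)`. -/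
noncomputable def circPascal (d y0 n : ℕ) (k : ℤ) : ℕ :=
  ∑ i ∈ Finset.range (y0 + 1), ∑ᶠ j : ℤ, binomZ n (k - i + d * j)

/-- Corridor number of order `m`: the number of ±1 sequences of length `n` all of whose
partial sums, shifted by `y0`, stay in `{0,…,m}`. -/
noncomputable def corridorCount (m n y0 : ℕ) : ℕ :=
  Nat.card {r : Fin n → ℤ // (∀ i, r i = 1 ∨ r i = -1) ∧
    ∀ j : Fin n, 0 ≤ (y0 : ℤ) + ∑ i ∈ Finset.Iic j, r i ∧
      (y0 : ℤ) + ∑ i ∈ Finset.Iic j, r i ≤ (m : ℤ)}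

/-!
Write `σ t` for `σ_{n,t}` with `d = m + 2`, and `N b` for the number of corridor paths of length
`n` ending at height `b`. Pascal's rule gives `σ_{n+1} t = σ_n t + σ_n (t - 1)`, so
`Δ t = σ t - σ (t + 1)`, read at height `b = 2t - n`, satisfies the same recursion
`N_{n+1} b = N_n (b - 1) + N_n (b + 1)` as the path counts. The symmetry `σ (n - t) = σ t` and
`d`-periodicity make `Δ` vanish at the walls `b = -1` and `b = m + 1`, hence `N (2t - n) = Δ t`
throughout the corridor. Summing over the corridor telescopes to
`c_n = σ ⌈n/2⌉ - σ (⌊(n + m)/2⌋ + 1)`. Since `N ≥ 0`, `σ` decreases between these two arguments,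
and by symmetry and periodicity this stretch already takes every value of the row, so they are
its maximum and minimum.
-/

open Finset Function

lemma Fin.Iic_last (n : ℕ) : Iic (Fin.last n) = univ := Iic_top

lemma Nat.card_subtype_eq_sum_card_fiberwise {α β : Type*} [DecidableEq β] {p : α → Prop}
    (hp : {a | p a}.Finite) {f : α → β} {s : Finset β} (hf : ∀ a, p a → f a ∈ s) :
    Nat.card {a // p a} = ∑ b ∈ s, Nat.card {a // p a ∧ f a = b} := by
  classical
  have : Fintype {a // p a} := hp.fintype
  rw [Nat.card_eq_fintype_card, ← Finset.card_univ,
    Finset.card_eq_sum_card_fiberwise (f := fun a : {a // p a} => f a) fun a _ => hf a a.2]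
  refine Finset.sum_congr rfl fun b _ => ?_
  rw [← Nat.card_congr (Equiv.subtypeSubtypeEquivSubtypeInter p (f · = b)),
    Nat.card_eq_fintype_card, Fintype.card_subtype]

lemma Nat.card_subtype_last_eq_card_snoc {α : Type*} {n : ℕ} (p : (Fin (n + 1) → α) → Prop)
    (c : α) :
    Nat.card {r // p r ∧ r (Fin.last n) = c} = Nat.card {r : Fin n → α // p (Fin.snoc r c)} :=
  Nat.card_congr
    { toFun r := ⟨Fin.init r.1, by simpa only [← r.2.2, Fin.snoc_init_self] using r.2.1⟩
      invFun r := ⟨Fin.snoc r.1 c, r.2, Fin.snoc_last _ _⟩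
      left_inv r := Subtype.ext <| by simp only [← r.2.2, Fin.snoc_init_self]
      right_inv r := Subtype.ext (by simp) }

-- `ha` lets the reflection `k ↦ c - k` carry `[c - b, a)` into `[a, b]`, and `hb` makes
-- `[c - b, b]` contain a full period.
theorem Function.Periodic.mem_Icc_of_antitoneOn {α : Type*} [Preorder α] {f : ℤ → α}
    {d c a b : ℤ} (hper : Periodic f d) (hd : 0 < d) (hsymm : ∀ k, f (c - k) = f k)
    (hanti : AntitoneOn f (Set.Icc a b)) (ha : 2 * a ≤ c + 1) (hb : c + d ≤ 2 * b + 1) (k : ℤ) :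
    f k ∈ Set.Icc (f b) (f a) := by
  have h_half : ∀ z ∈ Set.Icc a b, f z ∈ Set.Icc (f b) (f a) := fun z hz =>
    ⟨hanti hz ⟨by omega, le_rfl⟩ hz.2, hanti ⟨le_rfl, by omega⟩ hz hz.1⟩
  obtain ⟨y, ⟨hy₀, hy₁⟩, hky⟩ := hper.exists_mem_Ico hd k (c - b)
  rw [hky]
  rcases le_or_gt a y with hay | hya
  · exact h_half y ⟨hay, by omega⟩
  · rw [← hsymm y]
    exact h_half (c - y) ⟨by omega, by omega⟩

theorem Function.Periodic.sup'_range_eq {α : Type*} [SemilatticeSup α] {f : ℤ → α} {d : ℕ}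
    (hf : Periodic f d) (hd : (range d).Nonempty) {a : ℤ} (ha : ∀ k, f k ≤ f a) :
    (range d).sup' hd (fun k : ℕ => f k) = f a := by
  obtain ⟨y, ⟨hy₀, hyd⟩, hay⟩ := hf.exists_mem_Ico₀ (by simpa [pos_iff_ne_zero] using hd) a
  refine le_antisymm (sup'_le _ _ fun k _ => ha k) ?_
  exact le_sup'_of_le _ (b := y.toNat) (mem_range.mpr (by omega))
    (by rw [Int.toNat_of_nonneg hy₀, hay])

theorem Function.Periodic.inf'_range_eq {α : Type*} [SemilatticeInf α] {f : ℤ → α} {d : ℕ}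
    (hf : Periodic f d) (hd : (range d).Nonempty) {a : ℤ} (ha : ∀ k, f a ≤ f k) :
    (range d).inf' hd (fun k : ℕ => f k) = f a := by
  obtain ⟨y, ⟨hy₀, hyd⟩, hay⟩ := hf.exists_mem_Ico₀ (by simpa [pos_iff_ne_zero] using hd) a
  refine le_antisymm ?_ (le_inf' _ _ fun k _ => ha k)
  exact inf'_le_of_le _ (b := y.toNat) (mem_range.mpr (by omega))
    (by rw [Int.toNat_of_nonneg hy₀, hay])

lemma binomZ_ne_zero_iff {n : ℕ} {x : ℤ} : binomZ n x ≠ 0 ↔ 0 ≤ x ∧ x ≤ n := by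
  unfold binomZ
  split_ifs with hx
  · rw [Ne, Nat.choose_eq_zero_iff]
    omega
  · simp [hx]

lemma binomZ_eq_zero {n : ℕ} {x : ℤ} (hx : ¬ (0 ≤ x ∧ x ≤ n)) : binomZ n x = 0 :=
  not_not.mp (mt binomZ_ne_zero_iff.mp hx)

lemma binomZ_succ (n : ℕ) (x : ℤ) : binomZ (n + 1) x = binomZ n x + binomZ n (x - 1) := by
  rcases lt_trichotomy x 0 with hx | rfl | hx
  · simp only [binomZ, if_neg hx.not_ge, if_neg (show ¬ 0 ≤ x - 1 by omega), add_zero]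
  · simp [binomZ]
  · have h_pred : (x - 1).toNat = x.toNat - 1 := by omega
    obtain ⟨k, hk⟩ : ∃ k, x.toNat = k + 1 := ⟨x.toNat - 1, by omega⟩
    simp only [binomZ, if_pos hx.le, if_pos (show 0 ≤ x - 1 by omega), h_pred, hk,
      Nat.choose_succ_succ', Nat.add_sub_cancel, add_comm]

lemma binomZ_self_sub (n : ℕ) (x : ℤ) : binomZ n (n - x) = binomZ n x := by
  by_cases hx : 0 ≤ x ∧ x ≤ n
  · obtain ⟨k, rfl⟩ : ∃ k : ℕ, x = k := ⟨x.toNat, by omega⟩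
    have hk : k ≤ n := by omega
    simp [binomZ, ← Nat.cast_sub hk, Nat.choose_symm hk]
  · rw [binomZ_eq_zero hx, binomZ_eq_zero (by omega)]

lemma binomZ_zero_left (x : ℤ) : binomZ 0 x = if x = 0 then 1 else 0 := by
  split_ifs with hx
  · simp [binomZ, hx]
  · exact binomZ_eq_zero (by omega)

lemma circPascal_zero_eq_finsum (d n : ℕ) (k : ℤ) :
    circPascal d 0 n k = ∑ᶠ j : ℤ, binomZ n (k + d * j) := by
  simp [circPascal]

lemma hasFiniteSupport_binomZ_add_mul {d : ℕ} (hd : d ≠ 0) (n : ℕ) (k : ℤ) :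
    HasFiniteSupport fun j : ℤ => binomZ n (k + d * j) := by
  have h_inj : Injective fun j : ℤ => k + d * j := fun i j h => by simpa [hd] using h
  exact ((Set.finite_Icc (0 : ℤ) n).preimage h_inj.injOn).subset fun j hj =>
    binomZ_ne_zero_iff.mp hj

lemma circPascal_zero_succ {d : ℕ} (hd : d ≠ 0) (n : ℕ) (k : ℤ) :
    circPascal d 0 (n + 1) k = circPascal d 0 n k + circPascal d 0 n (k - 1) := by
  simp only [circPascal_zero_eq_finsum, binomZ_succ, sub_add_eq_add_sub]
  exact finsum_add_distrib (hasFiniteSupport_binomZ_add_mul hd n k)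
    (by simpa only [sub_add_eq_add_sub] using hasFiniteSupport_binomZ_add_mul hd n (k - 1))

lemma circPascal_zero_zero {d : ℕ} (hd : d ≠ 0) (k : ℤ) :
    circPascal d 0 0 k = if (d : ℤ) ∣ k then 1 else 0 := by
  simp only [circPascal_zero_eq_finsum, binomZ_zero_left]
  split_ifs with hk
  · obtain ⟨j, rfl⟩ := hk
    rw [finsum_eq_single _ (-j) fun i hi => if_neg fun h => hi ?_]
    · simp
    · have : (d : ℤ) * (j + i) = 0 := by linarith
      simpa [hd, eq_neg_iff_add_eq_zero, add_comm] using this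
  · exact finsum_eq_zero_of_forall_eq_zero fun j => if_neg fun h => hk ⟨-j, by linarith⟩

lemma periodic_circPascal_zero (d n : ℕ) : Periodic (circPascal d 0 n) d := fun k => by
  simp only [circPascal_zero_eq_finsum]
  rw [← finsum_comp_equiv (Equiv.subRight 1)]
  congr 1 with j
  simp only [Equiv.subRight_apply]
  ring_nf

lemma circPascal_zero_self_sub (d n : ℕ) (k : ℤ) :
    circPascal d 0 n (n - k) = circPascal d 0 n k := by
  simp only [circPascal_zero_eq_finsum]
  rw [← finsum_comp_equiv (Equiv.neg ℤ)]
  congr 1 with j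
  rw [← binomZ_self_sub n (k + d * j)]
  simp only [Equiv.neg_apply]
  ring_nf

lemma circPascal_zero_add_one_eq {d n : ℕ} {t : ℤ} (h : (d : ℤ) ∣ n - 2 * t - 1) :
    circPascal d 0 n (t + 1) = circPascal d 0 n t := by
  obtain ⟨j, hj⟩ := h
  calc circPascal d 0 n (t + 1) = circPascal d 0 n (n - (t + 1)) :=
        (circPascal_zero_self_sub d n _).symm
    _ = circPascal d 0 n (t + j * d) := by congr 1; linarith
    _ = circPascal d 0 n t := (periodic_circPascal_zero d n).int_mul j t

def IsCorridorPath (m : ℕ) {n : ℕ} (r : Fin n → ℤ) : Prop :=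
  (∀ i, r i = 1 ∨ r i = -1) ∧ ∀ j, 0 ≤ ∑ i ∈ Iic j, r i ∧ ∑ i ∈ Iic j, r i ≤ m

lemma finite_setOf_isCorridorPath (m n : ℕ) : {r : Fin n → ℤ | IsCorridorPath m r}.Finite :=
  (Set.Finite.pi' fun _ => Set.toFinite {1, -1}).subset fun _ hr i => hr.1 i

lemma isCorridorPath_snoc_iff {m n : ℕ} {r : Fin n → ℤ} {c : ℤ} :
    IsCorridorPath m (Fin.snoc r c : Fin (n + 1) → ℤ) ↔
      IsCorridorPath m r ∧ (c = 1 ∨ c = -1) ∧ 0 ≤ ∑ i, r i + c ∧ ∑ i, r i + c ≤ m := by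
  simp only [IsCorridorPath, Fin.forall_fin_succ', Fin.snoc_castSucc, Fin.snoc_last,
    Fin.sum_Iic_castSucc, Fin.Iic_last, Fin.sum_snoc]
  tauto

lemma IsCorridorPath.sum_mem {m n : ℕ} {r : Fin n → ℤ} (hr : IsCorridorPath m r) :
    0 ≤ ∑ i, r i ∧ ∑ i, r i ≤ m := by
  cases n with
  | zero => simp
  | succ n => simpa [Fin.Iic_last] using hr.2 (Fin.last n)

lemma IsCorridorPath.two_dvd_sum_add {m n : ℕ} {r : Fin n → ℤ} (hr : IsCorridorPath m r) :
    2 ∣ ∑ i, r i + n := by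
  have h_shift : ∑ i, r i + n = ∑ i, (r i + 1) := by simp [sum_add_distrib]
  rw [h_shift]
  exact dvd_sum fun i _ => by rcases hr.1 i with h | h <;> simp [h]

noncomputable def corridorEndCount (m n : ℕ) (b : ℤ) : ℕ :=
  Nat.card {r : Fin n → ℤ // IsCorridorPath m r ∧ ∑ i, r i = b}

lemma corridorEndCount_zero (m : ℕ) (b : ℤ) :
    corridorEndCount m 0 b = if b = 0 then 1 else 0 := by
  split_ifs with hb
  · subst hb
    rw [corridorEndCount, Nat.card_eq_one_iff_unique]
    exact ⟨inferInstance, ⟨⟨Fin.elim0, by simp [IsCorridorPath]⟩⟩⟩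
  · simp [corridorEndCount, IsCorridorPath, Ne.symm hb]

lemma corridorEndCount_eq_zero {m n : ℕ} {b : ℤ} (hb : ¬ (0 ≤ b ∧ b ≤ m)) :
    corridorEndCount m n b = 0 := by
  rw [corridorEndCount, Nat.card_eq_zero]
  exact Or.inl ⟨fun r => hb (r.2.2 ▸ r.2.1.sum_mem)⟩

lemma corridorEndCount_succ {m : ℕ} (n : ℕ) {b : ℤ} (hb₀ : 0 ≤ b) (hb₁ : b ≤ m) :
    corridorEndCount m (n + 1) b =
      corridorEndCount m n (b - 1) + corridorEndCount m n (b + 1) := by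
  rw [corridorEndCount, Nat.card_subtype_eq_sum_card_fiberwise
    ((finite_setOf_isCorridorPath m (n + 1)).subset fun _ hr => hr.1)
    (f := fun r => r (Fin.last n)) (s := {1, -1}) fun r hr => by simpa using hr.1.1 (Fin.last n),
    sum_pair (by norm_num)]
  simp only [Nat.card_subtype_last_eq_card_snoc, isCorridorPath_snoc_iff, Fin.sum_snoc]
  congr 1 <;> refine Nat.card_congr (Equiv.subtypeEquivRight fun r => ?_)
  all_goals exact ⟨fun ⟨⟨hr, _⟩, hs⟩ => ⟨hr, by omega⟩,
    fun ⟨hr, hs⟩ => ⟨⟨hr, by simp, by omega, by omega⟩, by omega⟩⟩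

-- `t` is the number of up-steps of a path.
lemma corridorCount_eq_sum_corridorEndCount (m n : ℕ) :
    corridorCount m n 0 =
      ∑ t ∈ Ico ((n + 1) / 2) ((n + m) / 2 + 1), corridorEndCount m n (2 * t - n) := by
  have h_count : corridorCount m n 0 = Nat.card {r : Fin n → ℤ // IsCorridorPath m r} :=
    Nat.card_congr (Equiv.subtypeEquivRight fun r => by simp [IsCorridorPath])
  have h_up {r : Fin n → ℤ} (hr : IsCorridorPath m r) (t : ℕ) :
      ((∑ i, r i + n) / 2).toNat = t ↔ ∑ i, r i = 2 * t - n := by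
    have := hr.two_dvd_sum_add
    have := hr.sum_mem
    omega
  have h_mem {r : Fin n → ℤ} (hr : IsCorridorPath m r) :
      ((∑ i, r i + n) / 2).toNat ∈ Ico ((n + 1) / 2) ((n + m) / 2 + 1) := by
    have := hr.two_dvd_sum_add
    have := hr.sum_mem
    rw [mem_Ico]
    omega
  rw [h_count, Nat.card_subtype_eq_sum_card_fiberwise (finite_setOf_isCorridorPath m n)
    (fun r hr => h_mem hr)]
  exact sum_congr rfl fun t _ =>
    Nat.card_congr (Equiv.subtypeEquivRight fun r => and_congr_right fun hr => h_up hr t)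

-- The walls `2t - n = -1` and `2t - n = m + 1` are included because both sides vanish there,
-- which lets the induction step apply the hypothesis at `t - 1` and `t` without case splits.
theorem corridorEndCount_eq_circPascal_sub {m : ℕ} (n : ℕ) {t : ℤ} (h₀ : -1 ≤ 2 * t - n)
    (h₁ : 2 * t - n ≤ m + 1) :
    (corridorEndCount m n (2 * t - n) : ℤ) =
      circPascal (m + 2) 0 n t - circPascal (m + 2) 0 n (t + 1) := by
  induction n generalizing t with
  | zero =>
    have h_succ : ¬ ((m + 2 : ℕ) : ℤ) ∣ t + 1 := fun h => by
      have := Int.le_of_dvd (by omega) h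
      omega
    have h_self : ((m + 2 : ℕ) : ℤ) ∣ t ↔ t = 0 :=
      ⟨fun h => Int.eq_zero_of_dvd_of_nonneg_of_lt (by omega) (by omega) h, fun h => h ▸ dvd_zero _⟩
    rw [corridorEndCount_zero, circPascal_zero_zero (by omega), circPascal_zero_zero (by omega),
      if_neg h_succ]
    by_cases ht : t = 0
    · simp [ht]
    · rw [if_neg (by omega), if_neg (mt h_self.mp ht)]
      simp
  | succ n ih =>
    by_cases hb : 0 ≤ 2 * t - (n + 1 : ℕ) ∧ 2 * t - (n + 1 : ℕ) ≤ m
    · have h_down := ih (t := t - 1) (by omega) (by omega)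
      have h_up := ih (t := t) (by omega) (by omega)
      rw [corridorEndCount_succ n hb.1 hb.2, circPascal_zero_succ (by omega),
        circPascal_zero_succ (by omega),
        show 2 * t - (n + 1 : ℕ) - 1 = 2 * (t - 1) - n by push_cast; ring,
        show 2 * t - (n + 1 : ℕ) + 1 = 2 * t - n by push_cast; ring]
      push_cast [h_down, h_up, sub_add_cancel, add_sub_cancel_right]
      ring
    · rw [corridorEndCount_eq_zero hb, circPascal_zero_add_one_eq, sub_self, Nat.cast_zero]
      rcases (by omega : 2 * t - (n + 1 : ℕ) = -1 ∨ 2 * t - (n + 1 : ℕ) = m + 1) with h | h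
      · exact ⟨0, by push_cast at h ⊢; omega⟩
      · exact ⟨-1, by push_cast at h ⊢; omega⟩

lemma corridorCount_eq_circPascal_sub (m n : ℕ) :
    (corridorCount m n 0 : ℤ) = circPascal (m + 2) 0 n ((n + 1) / 2 : ℕ) -
      circPascal (m + 2) 0 n ((n + m) / 2 + 1 : ℕ) := by
  rw [corridorCount_eq_sum_corridorEndCount, Nat.cast_sum, ← neg_sub,
    ← sum_Ico_sub (fun t : ℕ => (circPascal (m + 2) 0 n t : ℤ)) (by omega), ← sum_neg_distrib]
  refine sum_congr rfl fun t ht => ?_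
  rw [mem_Ico] at ht
  rw [corridorEndCount_eq_circPascal_sub n (by omega) (by omega)]
  push_cast
  ring

lemma antitoneOn_circPascal_zero (m n : ℕ) :
    AntitoneOn (circPascal (m + 2) 0 n) (Set.Icc ((n + 1) / 2 : ℕ) ((n + m) / 2 + 1 : ℕ)) :=
  antitoneOn_of_add_one_le Set.ordConnected_Icc fun t _ ⟨ht, _⟩ ⟨_, ht'⟩ => by
    have := corridorEndCount_eq_circPascal_sub (m := m) n (t := t) (by omega) (by omega)
    omega

/-- For `d ≥ 2` and `m = d−2`, the corridor number `c^{(m)}_n` equals the range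
(max minus min over `k = 0,…,d−1`) of row `n` of the circular Pascal array of order `d`. -/
theorem corridor_eq_circPascal_range (d : ℕ) (hd : 2 ≤ d) (n : ℕ) :
    (corridorCount (d - 2) n 0 : ℤ) =
      ((Finset.range d).sup' (Finset.nonempty_range_iff.mpr (by omega))
          (fun k => circPascal d 0 n (k : ℤ)) : ℤ) -
      ((Finset.range d).inf' (Finset.nonempty_range_iff.mpr (by omega))
          (fun k => circPascal d 0 n (k : ℤ)) : ℤ) := by
  obtain ⟨m, rfl⟩ : ∃ m, d = m + 2 := ⟨d - 2, by omega⟩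
  have h_bounds := (periodic_circPascal_zero (m + 2) n).mem_Icc_of_antitoneOn (c := n) (by omega)
    (circPascal_zero_self_sub (m + 2) n) (antitoneOn_circPascal_zero m n) (by omega) (by omega)
  have h_per : Periodic (fun k : ℤ => (circPascal (m + 2) 0 n k : ℤ)) (m + 2 : ℕ) :=
    (periodic_circPascal_zero (m + 2) n).comp _
  rw [Nat.add_sub_cancel, h_per.sup'_range_eq _ fun k => Nat.cast_le.mpr (h_bounds k).2,
    h_per.inf'_range_eq _ fun k => Nat.cast_le.mpr (h_bounds k).1,
    corridorCount_eq_circPascal_sub]
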